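/- Let N ≥ 2. For every x ∈ (0,1), the S_N-orbit of x is infinite, i.e. the set { f(x) : f ∈ F(N), f differentiable at x, f'(x) = 1 } is an infinite set. -/

import Mathlib

/-- A real number is an `N`-adic rational if it equals `k / N^m` for some `k : ℤ`, `m : ℕ`. -/
def IsNAdic (N : ℕ) (x : ℝ) : Prop :=
  ∃ (k : ℤ) (m : ℕ), x = (k : ℝ) / (N : ℝ) ^ m

/-- Membership (as a map of `[0,1]`) in the generalized Thompson group `F(N)`:
`f 0 = 0`, `f 1 = 1`, and there is a finite partition `0 = a 0 < a 1 < ⋯ < a n = 1`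
of `[0,1]` by `N`-adic rationals such that on each piece `[a i, a (i+1)]` the map `f`
is affine with slope an integer power of `N`.  (Such an `f` is automatically an
increasing piecewise-linear homeomorphism of `[0,1]` onto itself, with all
non-differentiability points `N`-adic.) -/
def InFN (N : ℕ) (f : ℝ → ℝ) : Prop :=
  f 0 = 0 ∧ f 1 = 1 ∧
    ∃ (n : ℕ) (a : ℕ → ℝ), 0 < n ∧ a 0 = 0 ∧ a n = 1 ∧
      (∀ i < n, a i < a (i + 1)) ∧
      (∀ i ≤ n, IsNAdic N (a i)) ∧
      (∀ i < n, ∃ q : ℤ, ∀ x ∈ Set.Icc (a i) (a (i + 1)),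
        f x = f (a i) + (N : ℝ) ^ q * (x - a i))


/-!
For a small step `δ = N⁻ᵐ`, the map with slopes `N`, `1`, `1/N` on `[0, δ]`, `[δ, 1 - Nδ]`,
`[1 - Nδ, 1]` lies in `F(N)` and translates the middle piece by `(N - 1)δ`. Once `δ < x < 1 - Nδ`,
which holds for all large `m`, it sends `x` to `x + (N - 1)N⁻ᵐ` with derivative `1`, and these
points are pairwise distinct.
-/

open Set Filter Topology Function

noncomputable def shiftMap (N : ℕ) (δ z : ℝ) : ℝ :=
  if z ≤ δ then N * z else if z ≤ 1 - N * δ then z + (N - 1) * δ else 1 + (z - 1) / N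

section shiftMap

variable {N : ℕ} {δ z : ℝ}

lemma shiftMap_of_le (h : z ≤ δ) : shiftMap N δ z = N * z := if_pos h

lemma shiftMap_of_mem_Icc (h : z ∈ Icc δ (1 - N * δ)) : shiftMap N δ z = z + (N - 1) * δ := by
  rcases h.1.eq_or_lt with rfl | hlt
  · rw [shiftMap_of_le le_rfl]; ring
  · simp [shiftMap, not_le.mpr hlt, h.2]

lemma shiftMap_of_le_right (hN : N ≠ 0) (hδ : δ < 1 - N * δ) (h : 1 - N * δ ≤ z) :
    shiftMap N δ z = 1 + (z - 1) / N := by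
  rcases h.eq_or_lt with rfl | hlt
  · rw [shiftMap_of_mem_Icc ⟨hδ.le, le_rfl⟩]; field_simp; ring
  · simp [shiftMap, not_le.mpr (hδ.trans hlt), not_le.mpr hlt]

lemma hasDerivAt_shiftMap (h₁ : δ < z) (h₂ : z < 1 - N * δ) : HasDerivAt (shiftMap N δ) 1 z := by
  refine ((hasDerivAt_id z).add_const ((N - 1) * δ)).congr_of_eventuallyEq ?_
  filter_upwards [Ioo_mem_nhds h₁ h₂] with w hw
  exact shiftMap_of_mem_Icc ⟨hw.1.le, hw.2.le⟩

theorem inFN_shiftMap (hN : N ≠ 0) (m : ℕ) (hδ : ((N : ℝ) ^ m)⁻¹ < 1 - N * ((N : ℝ) ^ m)⁻¹) :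
    InFN N (shiftMap N ((N : ℝ) ^ m)⁻¹) := by
  set δ : ℝ := ((N : ℝ) ^ m)⁻¹ with hδ_def
  have hδ₀ : 0 < δ := by positivity
  have hb₁ : 1 - N * δ < 1 := by
    linarith [mul_pos (Nat.cast_pos.mpr (Nat.pos_of_ne_zero hN)) hδ₀]
  have h₀ : shiftMap N δ 0 = 0 := by rw [shiftMap_of_le hδ₀.le, mul_zero]
  refine ⟨h₀, by rw [shiftMap_of_le_right hN hδ hb₁.le]; simp, 3,
    fun i => [0, δ, 1 - N * δ, 1].getD i 1, by norm_num, rfl, rfl, ?_, ?_, ?_⟩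
  · intro i hi
    interval_cases i <;> simp [hδ₀, hδ, hb₁]
  · intro i hi
    interval_cases i
    · exact ⟨0, 0, by simp⟩
    · exact ⟨1, m, by simp [hδ_def]⟩
    · exact ⟨(N : ℤ) ^ m - N, m, by simp [hδ_def]; field_simp⟩
    · exact ⟨1, 0, by simp⟩
  · intro i hi
    interval_cases i
    · refine ⟨1, fun z hz => ?_⟩
      simp only [List.getD_cons_zero, List.getD_cons_succ] at hz ⊢
      rw [shiftMap_of_le hz.2, h₀, zpow_one]; ring
    · refine ⟨0, fun z hz => ?_⟩
      simp only [List.getD_cons_zero, List.getD_cons_succ] at hz ⊢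
      rw [shiftMap_of_mem_Icc hz, shiftMap_of_mem_Icc ⟨le_rfl, hδ.le⟩, zpow_zero]; ring
    · refine ⟨-1, fun z hz => ?_⟩
      simp only [List.getD_cons_zero, List.getD_cons_succ] at hz ⊢
      rw [shiftMap_of_le_right hN hδ hz.1, shiftMap_of_le_right hN hδ le_rfl, zpow_neg_one]
      field_simp; ring

end shiftMap

theorem statement12 (N : ℕ) (hN : 2 ≤ N) (x : ℝ) (hx : x ∈ Set.Ioo (0 : ℝ) 1) :
    Set.Infinite { y : ℝ | ∃ f : ℝ → ℝ, InFN N f ∧ HasDerivAt f 1 x ∧ f x = y } := by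
  have hN₁ : (1 : ℝ) < N := by exact_mod_cast hN
  set δ : ℕ → ℝ := fun m => ((N : ℝ) ^ m)⁻¹
  have hδ : Tendsto δ atTop (𝓝 0) :=
    tendsto_inv_atTop_zero.comp (tendsto_pow_atTop_atTop_of_one_lt hN₁)
  have hNδ : Tendsto (fun m => N * δ m) atTop (𝓝 0) := by simpa using hδ.const_mul (N : ℝ)
  have hsmall : ∀ᶠ m in atTop, δ m < x ∧ x < 1 - N * δ m := by
    filter_upwards [hδ.eventually (gt_mem_nhds hx.1),
      hNδ.eventually (gt_mem_nhds (sub_pos.mpr hx.2))] with m h₁ h₂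
    exact ⟨h₁, by linarith⟩
  have hinj : Injective fun m => x + (N - 1) * δ m :=
    (add_right_injective x).comp <| (mul_right_injective₀ (by linarith)).comp <|
      inv_injective.comp (pow_right_injective₀ (by linarith) hN₁.ne')
  refine ((Nat.frequently_atTop_iff_infinite.mp hsmall.frequently).image hinj.injOn).mono ?_
  rintro _ ⟨m, ⟨h₁, h₂⟩, rfl⟩
  exact ⟨_, inFN_shiftMap (by omega) m (h₁.trans h₂), hasDerivAt_shiftMap h₁ h₂,
    shiftMap_of_mem_Icc ⟨h₁.le, h₂.le⟩⟩
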